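/- Let C_n : C(q) → V_1^{⊗2n} be a U_q(sl_2)-intertwiner into the invariant submodule. Then (E^(n) F^(n) ⊗ 1) ∘ C_n = (1 ⊗ F^(n) E^(n))(K^n ⊗ K^n) ∘ C_n. -/

import Mathlib

noncomputable section

open Finset

/-- The base field ℂ(q). -/
abbrev Fq : Type := RatFunc ℂ

/-- The variable q. -/
def q : Fq := RatFunc.X

/-- Quantum integer [k] = ∑_{j=0}^{k-1} q^{k-2j-1}. -/
def qint (k : ℕ) : Fq := ∑ j ∈ Finset.range k, q ^ ((k : ℤ) - 2 * j - 1)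

/-- Quantum factorial [k]!. -/
def qfact (k : ℕ) : Fq := ∏ j ∈ Finset.range k, qint (j + 1)

/-- Quantum binomial coefficient. -/
def qbinom (n k : ℕ) : Fq := qfact n / (qfact k * qfact (n - k))

/-- The n-th tensor power V₁^{⊗n} of the 2-dimensional simple module, modelled
as coefficient functions on the standard basis {v_a : a ∈ {0,1}^n}. -/
abbrev V (n : ℕ) : Type := (Fin n → Fin 2) → Fq

/-- weight contribution of a single tensor factor -/
def wtc (a : Fin 2) : ℤ := 2 * (a : ℤ) - 1

/-- total weight of a basis vector -/
def wt {n : ℕ} (b : Fin n → Fin 2) : ℤ := ∑ i, wtc (b i)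

/-- Action of E on V₁^{⊗n} via iterated comultiplication Δ(E)=1⊗E+E⊗K⁻¹. -/
def Eop {n : ℕ} (x : V n) : V n := fun b =>
  ∑ i : Fin n, if b i = 1 then
    q ^ (-(∑ j ∈ Finset.univ.filter (fun j => i < j), wtc (b j))) *
      x (Function.update b i 0)
  else 0

/-- Action of F on V₁^{⊗n} via iterated comultiplication Δ(F)=K⊗F+F⊗1. -/
def Fop {n : ℕ} (x : V n) : V n := fun b =>
  ∑ i : Fin n, if b i = 0 then
    q ^ (∑ j ∈ Finset.univ.filter (fun j => j < i), wtc (b j)) *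
      x (Function.update b i 1)
  else 0

/-- Action of K on V₁^{⊗n}. -/
def Kop {n : ℕ} (x : V n) : V n := fun b => q ^ (wt b) * x b

/-- Action of K⁻¹ on V₁^{⊗n}. -/
def Kinv {n : ℕ} (x : V n) : V n := fun b => q ^ (-(wt b)) * x b

/-- Divided power E^{(k)} = E^k/[k]!. -/
def Ediv {n : ℕ} (k : ℕ) (x : V n) : V n := fun b => (qfact k)⁻¹ * (Eop^[k] x) b

/-- Divided power F^{(k)} = F^k/[k]!. -/
def Fdiv {n : ℕ} (k : ℕ) (x : V n) : V n := fun b => (qfact k)⁻¹ * (Fop^[k] x) b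

/-- Projection 1_λ onto the q^λ-eigenspace of K. -/
def proj {n : ℕ} (lam : ℤ) (x : V n) : V n := fun b => if wt b = lam then x b else 0

/-- The operator p_{k,n} = E^{(k)}F^{(k)} / [n choose k]. -/
def pkn {n : ℕ} (k : ℕ) (x : V n) : V n := fun b => (qbinom n k)⁻¹ * Ediv k (Fdiv k x) b

/-- The Jones-Wenzl projector p_n = ∑_k p_{k,n} 1_{-n+2k}. -/
def JW {n : ℕ} (x : V n) : V n :=
  ∑ k ∈ Finset.range (n + 1), pkn k (proj (-(n : ℤ) + 2 * k) x)


/-- V₁^{⊗(n+m)} viewed as V₁^{⊗n} ⊗ V₁^{⊗m}. -/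
abbrev W (n m : ℕ) : Type := (Fin n → Fin 2) → (Fin m → Fin 2) → Fq

/-- An operator acting on the first n tensor factors. -/
def opL {n m : ℕ} (f : V n → V n) (x : W n m) : W n m := fun b c => f (fun b' => x b' c) b

/-- An operator acting on the last m tensor factors. -/
def opR {n m : ℕ} (f : V m → V m) (x : W n m) : W n m := fun b c => f (x b) c

/-- Total action of E on V₁^{⊗n} ⊗ V₁^{⊗m} via Δ(E) = 1⊗E + E⊗K⁻¹. -/
def Etot {n m : ℕ} (x : W n m) : W n m := opR Eop x + opL Eop (opR Kinv x)

/-- Total action of F via Δ(F) = K⊗F + F⊗1. -/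
def Ftot {n m : ℕ} (x : W n m) : W n m := opL Kop (opR Fop x) + opL Fop x

/-- Total action of K via Δ(K) = K⊗K. -/
def Ktot {n m : ℕ} (x : W n m) : W n m := opL Kop (opR Kop x)


/-! ### Auxiliary machinery -/

/-! ### Auxiliary machinery -/

lemma q_ne : (q : Fq) ≠ 0 := RatFunc.X_ne_zero

lemma wt_update {n : ℕ} (b : Fin n → Fin 2) (i : Fin n) (v : Fin 2) :
    wt (Function.update b i v) = wt b - wtc (b i) + wtc v := by
  unfold wt
  have h : ∀ j, wtc (Function.update b i v j) =
      Function.update (fun j => wtc (b j)) i (wtc v) j := by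
    intro j
    by_cases hj : j = i
    · subst hj; simp
    · simp [Function.update_of_ne hj]
  simp_rw [h]
  rw [Finset.sum_update_of_mem (Finset.mem_univ i)]
  have h2 : ∑ j, wtc (b j) = wtc (b i) + ∑ j ∈ Finset.univ \ {i}, wtc (b j) := by
    rw [Finset.sdiff_singleton_eq_erase, ← Finset.add_sum_erase _ _ (Finset.mem_univ i)]
  omega

/-- matrix action -/
def mact {n : ℕ} (A : (Fin n → Fin 2) → (Fin n → Fin 2) → Fq) (x : V n) : V n :=
  fun b => ∑ b', A b b' * x b'

def IsMat {n : ℕ} (f : V n → V n) : Prop := ∃ A, ∀ x, f x = mact A x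

lemma isMat_id {n : ℕ} : IsMat (id : V n → V n) := by
  refine ⟨fun b b' => if b' = b then 1 else 0, fun x => ?_⟩
  funext b
  simp [mact, ite_mul]

lemma isMat_comp {n : ℕ} {f g : V n → V n} (hf : IsMat f) (hg : IsMat g) :
    IsMat (f ∘ g) := by
  obtain ⟨A, hA⟩ := hf
  obtain ⟨B, hB⟩ := hg
  refine ⟨fun b b'' => ∑ b', A b b' * B b' b'', fun x => ?_⟩
  funext b
  simp only [Function.comp_apply, hA, hB, mact, Finset.mul_sum, Finset.sum_mul]
  rw [Finset.sum_comm]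
  exact Finset.sum_congr rfl fun _ _ => Finset.sum_congr rfl fun _ _ => by ring

lemma isMat_iterate {n : ℕ} {f : V n → V n} (hf : IsMat f) (k : ℕ) : IsMat f^[k] := by
  induction k with
  | zero => exact isMat_id
  | succ k ih => rw [Function.iterate_succ]; exact isMat_comp ih hf

lemma isMat_smul {n : ℕ} {f : V n → V n} (hf : IsMat f) (s : Fq) (x : V n) :
    f (fun b => s * x b) = fun b => s * f x b := by
  obtain ⟨A, hA⟩ := hf
  funext b
  simp only [hA, mact, Finset.mul_sum]
  exact Finset.sum_congr rfl fun _ _ => by ring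

lemma isMat_Eop {n : ℕ} : IsMat (Eop (n := n)) := by
  refine ⟨fun b b' => ∑ i : Fin n, if b i = 1 ∧ b' = Function.update b i 0 then
      q ^ (-(∑ j ∈ Finset.univ.filter (fun j => i < j), wtc (b j))) else 0, fun x => ?_⟩
  funext b
  rw [Eop, mact]
  simp only [Finset.sum_mul, ite_mul, zero_mul]
  rw [Finset.sum_comm]
  refine Finset.sum_congr rfl fun i _ => ?_
  by_cases h : b i = 1
  · simp [h, Finset.sum_ite_eq']
  · simp [h]

lemma isMat_Fop {n : ℕ} : IsMat (Fop (n := n)) := by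
  refine ⟨fun b b' => ∑ i : Fin n, if b i = 0 ∧ b' = Function.update b i 1 then
      q ^ (∑ j ∈ Finset.univ.filter (fun j => j < i), wtc (b j)) else 0, fun x => ?_⟩
  funext b
  rw [Fop, mact]
  simp only [Finset.sum_mul, ite_mul, zero_mul]
  rw [Finset.sum_comm]
  refine Finset.sum_congr rfl fun i _ => ?_
  by_cases h : b i = 0
  · simp [h, Finset.sum_ite_eq']
  · simp [h]

lemma isMat_Kop {n : ℕ} : IsMat (Kop (n := n)) := by
  refine ⟨fun b b' => if b' = b then q ^ wt b else 0, fun x => ?_⟩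
  funext b
  simp [Kop, mact, ite_mul]

lemma isMat_Kinv {n : ℕ} : IsMat (Kinv (n := n)) := by
  refine ⟨fun b b' => if b' = b then q ^ (-wt b) else 0, fun x => ?_⟩
  funext b
  simp [Kinv, mact, ite_mul]

/-! ### opL/opR layer -/

/-- scalar multiple on W -/
def sm {n m : ℕ} (s : Fq) (x : W n m) : W n m := fun b c => s * x b c

lemma sm_sm {n m : ℕ} (s t : Fq) (x : W n m) : sm s (sm t x) = sm (s * t) x := by
  funext b c; simp [sm, mul_assoc]

lemma sm_one {n m : ℕ} (x : W n m) : sm 1 x = x := by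
  funext b c; simp [sm]

lemma opL_opL {n m : ℕ} (f g : V n → V n) (x : W n m) :
    opL f (opL g x) = opL (f ∘ g) x := rfl

lemma opR_opR {n m : ℕ} (f g : V m → V m) (x : W n m) :
    opR f (opR g x) = opR (f ∘ g) x := rfl

lemma opL_id {n m : ℕ} (x : W n m) : opL (id : V n → V n) x = x := rfl

lemma opR_id {n m : ℕ} (x : W n m) : opR (id : V m → V m) x = x := rfl

lemma opLR_comm {n m : ℕ} {f : V n → V n} {g : V m → V m}
    (hf : IsMat f) (hg : IsMat g) (x : W n m) :
    opL f (opR g x) = opR g (opL f x) := by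
  obtain ⟨A, hA⟩ := hf
  obtain ⟨B, hB⟩ := hg
  funext b c
  simp only [opL, opR, hA, hB, mact, Finset.mul_sum]
  rw [Finset.sum_comm]
  exact Finset.sum_congr rfl fun _ _ => Finset.sum_congr rfl fun _ _ => by ring

lemma opL_sm {n m : ℕ} {f : V n → V n} (hf : IsMat f) (s : Fq) (x : W n m) :
    opL f (sm s x) = sm s (opL f x) := by
  funext b c
  have := congrFun (isMat_smul hf s (fun b' => x b' c)) b
  simpa [opL, sm] using this

lemma opR_sm {n m : ℕ} {f : V m → V m} (hf : IsMat f) (s : Fq) (x : W n m) :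
    opR f (sm s x) = sm s (opR f x) := by
  funext b c
  have := congrFun (isMat_smul hf s (x b)) c
  exact this

/-- lift a pointwise-scalar commutation statement on V to opL -/
lemma opL_pt {n m : ℕ} {f g : V n → V n} {s : Fq}
    (h : ∀ x, f x = fun b => s * g x b) (y : W n m) :
    opL f y = sm s (opL g y) := by
  funext b c
  simp only [opL, sm]
  rw [h]

lemma opR_pt {n m : ℕ} {f g : V m → V m} {s : Fq}
    (h : ∀ x, f x = fun b => s * g x b) (y : W n m) :
    opR f y = sm s (opR g y) := by
  funext b c
  simp only [opR, sm]
  rw [h]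

/-! ### commutation relations on V -/

lemma flip_q {α : Type*} {X Y : α → Fq} {e : ℤ}
    (h : X = fun b => q ^ e * Y b) : Y = fun b => q ^ (-e) * X b := by
  funext b
  rw [h]
  rw [← mul_assoc, ← zpow_add₀ q_ne, neg_add_cancel, zpow_zero, one_mul]

lemma Kop_Kinv {n : ℕ} (x : V n) : Kop (Kinv x) = x := by
  funext b
  rw [Kop, Kinv, ← mul_assoc, ← zpow_add₀ q_ne, add_neg_cancel, zpow_zero, one_mul]

lemma wtc0 : wtc 0 = -1 := by simp [wtc]
lemma wtc1 : wtc 1 = 1 := by simp [wtc]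

/-- F K = q² K F -/
lemma F_K {n : ℕ} (x : V n) : Fop (Kop x) = fun b => q ^ (2 : ℤ) * Kop (Fop x) b := by
  funext b
  simp only [Fop, Kop, Finset.mul_sum]
  refine Finset.sum_congr rfl fun i _ => ?_
  by_cases h : b i = 0
  · simp only [h, if_true]
    rw [wt_update, h, wtc0, wtc1]
    have : wt b - -1 + 1 = 2 + wt b := by ring
    rw [this, zpow_add₀ q_ne]
    ring
  · simp [h]

/-- E K = q⁻² K E -/
lemma E_K {n : ℕ} (x : V n) : Eop (Kop x) = fun b => q ^ (-2 : ℤ) * Kop (Eop x) b := by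
  funext b
  simp only [Eop, Kop, Finset.mul_sum]
  refine Finset.sum_congr rfl fun i _ => ?_
  by_cases h : b i = 1
  · simp only [h, if_true]
    rw [wt_update, h, wtc0, wtc1]
    have : wt b - 1 + -1 = -2 + wt b := by ring
    rw [this, zpow_add₀ q_ne]
    ring
  · simp [h]

/-- F^k K = q^{2k} K F^k -/
lemma Fiter_K {n : ℕ} (k : ℕ) (x : V n) :
    Fop^[k] (Kop x) = fun b => q ^ (2 * k : ℤ) * Kop (Fop^[k] x) b := by
  induction k generalizing x with
  | zero => funext b; simp
  | succ k ih =>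
    rw [Function.iterate_succ_apply, F_K x, isMat_smul (isMat_iterate isMat_Fop k), ih]
    funext b
    rw [← Function.iterate_succ_apply, ← mul_assoc, ← zpow_add₀ q_ne]
    congr 2 <;> (try push_cast) <;> (try ring)

/-- E^k K = q^{-2k} K E^k -/
lemma Eiter_K {n : ℕ} (k : ℕ) (x : V n) :
    Eop^[k] (Kop x) = fun b => q ^ (-(2 * k) : ℤ) * Kop (Eop^[k] x) b := by
  induction k generalizing x with
  | zero => funext b; simp
  | succ k ih =>
    rw [Function.iterate_succ_apply, E_K x, isMat_smul (isMat_iterate isMat_Eop k), ih]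
    funext b
    rw [← Function.iterate_succ_apply, ← mul_assoc, ← zpow_add₀ q_ne]
    congr 2 <;> (try push_cast) <;> (try ring)

/-- F^k K^m = q^{2km} K^m F^k -/
lemma Fiter_Kiter {n : ℕ} (k m : ℕ) (x : V n) :
    Fop^[k] (Kop^[m] x) = fun b => q ^ (2 * k * m : ℤ) * Kop^[m] (Fop^[k] x) b := by
  induction m generalizing x with
  | zero => funext b; simp
  | succ m ih =>
    rw [Function.iterate_succ_apply, ih (Kop x), Fiter_K,
      isMat_smul (isMat_iterate isMat_Kop m)]
    funext b
    rw [← Function.iterate_succ_apply, ← mul_assoc, ← zpow_add₀ q_ne]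
    congr 2 <;> (try push_cast) <;> (try ring)

/-- E^k K^m = q^{-2km} K^m E^k -/
lemma Eiter_Kiter {n : ℕ} (k m : ℕ) (x : V n) :
    Eop^[k] (Kop^[m] x) = fun b => q ^ (-(2 * k * m) : ℤ) * Kop^[m] (Eop^[k] x) b := by
  induction m generalizing x with
  | zero => funext b; simp
  | succ m ih =>
    rw [Function.iterate_succ_apply, ih (Kop x), Eiter_K,
      isMat_smul (isMat_iterate isMat_Kop m)]
    funext b
    rw [← Function.iterate_succ_apply, ← mul_assoc, ← zpow_add₀ q_ne]
    congr 2 <;> (try push_cast) <;> (try ring)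

/-! ### composition helpers avoiding Function.comp -/

lemma opL_comp {n m : ℕ} {f g h : V n → V n}
    (hfg : ∀ x, f (g x) = h x) (y : W n m) :
    opL f (opL g y) = opL h y :=
  funext fun b => funext fun c => congrFun (hfg fun b'' => y b'' c) b

lemma opR_comp {n m : ℕ} {f g h : V m → V m}
    (hfg : ∀ x, f (g x) = h x) (y : W n m) :
    opR f (opR g y) = opR h y :=
  funext fun b => funext fun c => congrFun (hfg (y b)) c

lemma opL_split {n m : ℕ} (f g : V n → V n) (y : W n m) :
    opL (fun x => f (g x)) y = opL f (opL g y) := rfl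

lemma opR_split {n m : ℕ} (f g : V m → V m) (y : W n m) :
    opR (fun x => f (g x)) y = opR f (opR g y) := rfl

lemma opL_comp_pt {n m : ℕ} {f g h : V n → V n} {s : Fq}
    (hfg : ∀ x, f (g x) = fun b => s * h x b) (y : W n m) :
    opL f (opL g y) = sm s (opL h y) :=
  funext fun b => funext fun c => congrFun (hfg fun b'' => y b'' c) b

lemma opR_comp_pt {n m : ℕ} {f g h : V m → V m} {s : Fq}
    (hfg : ∀ x, f (g x) = fun b => s * h x b) (y : W n m) :
    opR f (opR g y) = sm s (opR h y) :=
  funext fun b => funext fun c => congrFun (hfg (y b)) c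

/-! ### consequences of invariance -/

lemma hFc {n : ℕ} {c : W n n} (hF : Ftot c = 0) :
    opL Fop c = sm (-1) (opL Kop (opR Fop c)) := by
  funext b c'
  have h := congrFun (congrFun hF b) c'
  simp only [Ftot, Pi.add_apply, Pi.zero_apply] at h
  simp only [sm]
  linear_combination h

lemma hEc {n : ℕ} {c : W n n} (hE : Etot c = 0) :
    opL Eop c = sm (-1) (opR Kop (opR Eop c)) := by
  have h1 : opL Eop (opR Kinv c) = sm (-1) (opR Eop c) := by
    funext b c'
    have h := congrFun (congrFun hE b) c'
    simp only [Etot, Pi.add_apply, Pi.zero_apply] at h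
    simp only [sm]
    linear_combination h
  have h2 : opR Kop (opR Kinv c) = c := opR_comp (fun x => Kop_Kinv x) c
  calc opL Eop c = opL Eop (opR Kop (opR Kinv c)) := by rw [h2]
    _ = opR Kop (opL Eop (opR Kinv c)) := opLR_comm isMat_Eop isMat_Kop _
    _ = opR Kop (sm (-1) (opR Eop c)) := by rw [h1]
    _ = sm (-1) (opR Kop (opR Eop c)) := opR_sm isMat_Kop _ _

/-- Lemma A: L_F^k c = (-1)^k q^{k(k-1)} L_K^k R_F^k c -/
lemma lemA {n : ℕ} {c : W n n} (hF : Ftot c = 0) (k : ℕ) :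
    opL (Fop^[k]) c =
      sm ((-1) ^ k * q ^ (k * (k - 1) : ℤ)) (opL (Kop^[k]) (opR (Fop^[k]) c)) := by
  induction k with
  | zero =>
    simp only [Function.iterate_zero, opL_id, opR_id]
    norm_num [sm_one]
  | succ k ih =>
    have e1 : opL (Fop^[k + 1]) c = opL (Fop^[k]) (opL Fop c) :=
      (opL_comp (fun x => (Function.iterate_succ_apply Fop k x).symm) c).symm
    rw [e1, hFc hF, opL_sm (isMat_iterate isMat_Fop k)]
    rw [opL_comp_pt (fun x => Fiter_K k x), opL_split]
    rw [opLR_comm (isMat_iterate isMat_Fop k) isMat_Fop, ih,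
      opR_sm isMat_Fop]
    rw [← opLR_comm (isMat_iterate isMat_Kop k) isMat_Fop]
    rw [opR_comp (f := Fop) (g := Fop^[k]) (h := Fop^[k + 1])
      (fun x => (Function.iterate_succ_apply' Fop k x).symm) c]
    rw [opL_sm isMat_Kop, opL_comp (f := Kop) (g := Kop^[k]) (h := Kop^[k + 1])
      (fun x => (Function.iterate_succ_apply' Kop k x).symm)]
    rw [sm_sm, sm_sm]
    have hs : (-1 : Fq) * q ^ (2 * (k:ℤ)) * ((-1) ^ k * q ^ ((k:ℤ) * ((k:ℤ) - 1)))
        = (-1) ^ (k + 1) * q ^ (((k+1 : ℕ):ℤ) * (((k+1 : ℕ):ℤ) - 1)) := by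
      have he : ((k+1:ℕ):ℤ) * (((k+1:ℕ):ℤ) - 1) = 2 * (k:ℤ) + (k:ℤ) * ((k:ℤ) - 1) := by
        push_cast; ring
      rw [he, zpow_add₀ q_ne, pow_succ]
      ring
    rw [hs]

/-- (K∘E)^k = q^{-k(k-1)} K^k E^k -/
lemma lemB2 {n : ℕ} (k : ℕ) (x : V n) :
    (fun y => Kop (Eop y))^[k] x =
      fun b => q ^ (-((k:ℤ) * ((k:ℤ) - 1))) * Kop^[k] (Eop^[k] x) b := by
  induction k generalizing x with
  | zero => funext b; simp
  | succ k ih =>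
    rw [Function.iterate_succ_apply, ih (Kop (Eop x))]
    funext b
    rw [show Eop^[k] (Kop (Eop x)) = fun b => q ^ (-(2 * k) : ℤ) * Kop (Eop^[k] (Eop x)) b
      from Eiter_K k (Eop x)]
    rw [isMat_smul (isMat_iterate isMat_Kop k)]
    rw [← Function.iterate_succ_apply Eop, ← Function.iterate_succ_apply Kop]
    rw [← mul_assoc, ← zpow_add₀ q_ne]
    congr 2
    push_cast
    ring

/-- L_E^k c = (-1)^k (R_K R_E)^k c -/
lemma lemB1 {n : ℕ} {c : W n n} (hE : Etot c = 0) (k : ℕ) :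
    opL (Eop^[k]) c = sm ((-1) ^ k) (opR ((fun y => Kop (Eop y))^[k]) c) := by
  induction k with
  | zero =>
    simp only [Function.iterate_zero, opL_id, opR_id]
    norm_num [sm_one]
  | succ k ih =>
    have e1 : opL (Eop^[k + 1]) c = opL (Eop^[k]) (opL Eop c) :=
      (opL_comp (f := Eop^[k]) (g := Eop) (h := Eop^[k + 1])
        (fun x => (Function.iterate_succ_apply Eop k x).symm) c).symm
    rw [e1, hEc hE, opL_sm (isMat_iterate isMat_Eop k)]
    rw [opR_comp (f := Kop) (g := Eop) (h := fun y => Kop (Eop y)) (fun x => rfl) c]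
    rw [opLR_comm (g := fun y => Kop (Eop y)) (isMat_iterate isMat_Eop k)
      (isMat_comp isMat_Kop isMat_Eop), ih]
    rw [opR_sm (f := fun y => Kop (Eop y)) (isMat_comp isMat_Kop isMat_Eop), sm_sm]
    rw [opR_comp (f := fun y => Kop (Eop y)) (g := (fun y => Kop (Eop y))^[k])
      (h := (fun y => Kop (Eop y))^[k + 1])
      (fun x => (Function.iterate_succ_apply' (fun y => Kop (Eop y)) k x).symm) c]
    congr 1
    rw [pow_succ]
    ring

/-- Lemma B: L_E^k c = (-1)^k q^{-k(k-1)} R_K^k R_E^k c -/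
lemma lemB3 {n : ℕ} {c : W n n} (hE : Etot c = 0) (k : ℕ) :
    opL (Eop^[k]) c =
      sm ((-1) ^ k * q ^ (-((k:ℤ) * ((k:ℤ) - 1)))) (opR (Kop^[k]) (opR (Eop^[k]) c)) := by
  rw [lemB1 hE k]
  rw [opR_pt (f := (fun y => Kop (Eop y))^[k]) (g := fun y => Kop^[k] (Eop^[k] y))
    (fun x => lemB2 k x) c]
  rw [opR_split, sm_sm]

/-- iterated K-invariance -/
lemma Ktot_iter {n : ℕ} {x : W n n} (h : opL Kop (opR Kop x) = x) (m : ℕ) :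
    opL (Kop^[m]) (opR (Kop^[m]) x) = x := by
  induction m with
  | zero => simp only [Function.iterate_zero, opL_id, opR_id]
  | succ m ih =>
    have e1 : opL (Kop^[m + 1]) (opR (Kop^[m + 1]) x)
        = opL (Kop^[m]) (opL Kop (opR (Kop^[m]) (opR Kop x))) := by
      rw [opL_comp (f := Kop^[m]) (g := Kop) (h := Kop^[m + 1])
        (fun y => (Function.iterate_succ_apply Kop m y).symm)]
      rw [opR_comp (f := Kop^[m]) (g := Kop) (h := Kop^[m + 1])
        (fun y => (Function.iterate_succ_apply Kop m y).symm)]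
    rw [e1, opLR_comm isMat_Kop (isMat_iterate isMat_Kop m), h, ih]

/-- K commutes with F^m E^m -/
lemma KFE {n : ℕ} (m : ℕ) (x : V n) :
    Kop (Fop^[m] (Eop^[m] x)) = Fop^[m] (Eop^[m] (Kop x)) := by
  have h1 : ∀ y : V n, Kop (Fop^[m] y) = fun b => q ^ (-(2 * m : ℤ)) * Fop^[m] (Kop y) b :=
    fun y => flip_q (Fiter_K m y)
  have h2 : Kop (Eop^[m] x) = fun b => q ^ (-(-(2 * m) : ℤ)) * Eop^[m] (Kop x) b :=
    flip_q (Eiter_K m x)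
  rw [h1 (Eop^[m] x)]
  funext b
  rw [h2, isMat_smul (isMat_iterate isMat_Fop m)]
  rw [← mul_assoc, ← zpow_add₀ q_ne]
  norm_num

/-- R_F^n R_E^n c is K-invariant -/
lemma Ktot_Z {n : ℕ} {c : W n n} (hK : Ktot c = c) (m : ℕ) :
    opL Kop (opR Kop (opR (Fop^[m]) (opR (Eop^[m]) c)))
      = opR (Fop^[m]) (opR (Eop^[m]) c) := by
  have hK' : opL Kop (opR Kop c) = c := hK
  have h1 : opR Kop (opR (Fop^[m]) (opR (Eop^[m]) c))
      = opR (Fop^[m]) (opR (Eop^[m]) (opR Kop c)) := by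
    funext b c'
    show Kop (Fop^[m] (Eop^[m] (c b))) c' = Fop^[m] (Eop^[m] (Kop (c b))) c'
    rw [KFE]
  rw [h1, opLR_comm isMat_Kop (isMat_iterate isMat_Fop m),
    opLR_comm isMat_Kop (isMat_iterate isMat_Eop m), hK']

lemma core {n : ℕ} {c : W n n} (hE : Etot c = 0) (hF : Ftot c = 0) (hK : Ktot c = c) :
    opL (Eop^[n]) (opL (Fop^[n]) c) = opR (Fop^[n]) (opR (Eop^[n]) c) := by
  rw [lemA hF n, opL_sm (isMat_iterate isMat_Eop n)]
  rw [opL_comp_pt (f := Eop^[n]) (g := Kop^[n]) (h := fun x => Kop^[n] (Eop^[n] x))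
    (fun x => Eiter_Kiter n n x)]
  rw [opL_split]
  rw [opLR_comm (isMat_iterate isMat_Eop n) (isMat_iterate isMat_Fop n)]
  rw [lemB3 hE n, opR_sm (isMat_iterate isMat_Fop n)]
  rw [opR_comp_pt (f := Fop^[n]) (g := Kop^[n]) (h := fun x => Kop^[n] (Fop^[n] x))
    (fun x => Fiter_Kiter n n x)]
  rw [opR_split]
  simp only [opL_sm (isMat_iterate isMat_Kop n), sm_sm]
  rw [Ktot_iter (Ktot_Z hK n) n]
  have hS : ((-1 : Fq) ^ n * q ^ ((n:ℤ) * ((n:ℤ) - 1)) * (q ^ (-(2 * (n:ℤ) * (n:ℤ))) *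
      ((-1) ^ n * q ^ (-((n:ℤ) * ((n:ℤ) - 1))) * q ^ (2 * (n:ℤ) * (n:ℤ))))) = 1 := by
    have h1 : ((-1 : Fq) ^ n * (-1) ^ n) = 1 := by
      rw [← pow_add, ← two_mul, pow_mul]
      norm_num
    have h2 : (q ^ ((n:ℤ) * ((n:ℤ) - 1)) * q ^ (-(2 * (n:ℤ) * (n:ℤ))) *
        q ^ (-((n:ℤ) * ((n:ℤ) - 1))) * q ^ (2 * (n:ℤ) * (n:ℤ))) = 1 := by
      rw [← zpow_add₀ q_ne, ← zpow_add₀ q_ne, ← zpow_add₀ q_ne]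
      rw [show ((n:ℤ) * ((n:ℤ) - 1) + -(2 * (n:ℤ) * (n:ℤ)) + -((n:ℤ) * ((n:ℤ) - 1)) +
        2 * (n:ℤ) * (n:ℤ)) = 0 by ring]
      rfl
    calc ((-1 : Fq) ^ n * q ^ ((n:ℤ) * ((n:ℤ) - 1)) * (q ^ (-(2 * (n:ℤ) * (n:ℤ))) *
        ((-1) ^ n * q ^ (-((n:ℤ) * ((n:ℤ) - 1))) * q ^ (2 * (n:ℤ) * (n:ℤ)))))
        = ((-1 : Fq) ^ n * (-1) ^ n) * (q ^ ((n:ℤ) * ((n:ℤ) - 1)) * q ^ (-(2 * (n:ℤ) * (n:ℤ))) *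
          q ^ (-((n:ℤ) * ((n:ℤ) - 1))) * q ^ (2 * (n:ℤ) * (n:ℤ))) := by ring
      _ = 1 := by rw [h1, h2, one_mul]
  rw [hS, sm_one]

/-- Theorem: if c = C_n(1) is an invariant vector of V₁^{⊗n} ⊗ V₁^{⊗n}, then
(E^{(n)}F^{(n)} ⊗ 1) c = (1 ⊗ F^{(n)}E^{(n)})(K^n ⊗ K^n) c. -/
theorem EF_divided_power_slide (n : ℕ) (c : W n n)
    (hE : Etot c = 0) (hF : Ftot c = 0) (hK : Ktot c = c) :
    opL (fun y => Ediv n (Fdiv n y)) c =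
      opR (fun y => Fdiv n (Ediv n y)) (opL (Kop^[n]) (opR (Kop^[n]) c)) := by
  have hK' : opL Kop (opR Kop c) = c := hK
  have hKc : opL (Kop^[n]) (opR (Kop^[n]) c) = c := Ktot_iter hK' n
  rw [hKc]
  have hptL : ∀ x : V n, Ediv n (Fdiv n x) =
      fun b => ((qfact n)⁻¹ * (qfact n)⁻¹) * (fun y => Eop^[n] (Fop^[n] y)) x b := by
    intro x
    funext b
    show (qfact n)⁻¹ * (Eop^[n] (fun b' => (qfact n)⁻¹ * (Fop^[n] x) b')) b = _
    rw [isMat_smul (isMat_iterate isMat_Eop n)]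
    ring
  have hptR : ∀ x : V n, Fdiv n (Ediv n x) =
      fun b => ((qfact n)⁻¹ * (qfact n)⁻¹) * (fun y => Fop^[n] (Eop^[n] y)) x b := by
    intro x
    funext b
    show (qfact n)⁻¹ * (Fop^[n] (fun b' => (qfact n)⁻¹ * (Eop^[n] x) b')) b = _
    rw [isMat_smul (isMat_iterate isMat_Fop n)]
    ring
  rw [opL_pt hptL c, opR_pt hptR c, opL_split, opR_split, core hE hF hK]
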